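/- Let A and B be finite sets with A ∪ B nonempty, let π be a uniformly random permutation (bijection) of a finite ground set U containing A ∪ B, and define H(S) = min over x ∈ S of π(x) (viewing π as an injection into a linearly ordered set). Then P[H(A) = H(B)] = |A ∩ B| / |A ∪ B|. -/

import Mathlib

/-!
Let `m` be the element of `A ∪ B` that a permutation `π` sends lowest. Both `min π(A)` and
`min π(B)` lie above `π m`, with equality exactly when `m` belongs to the set, so the two minima
coincide iff `m ∈ A ∩ B`. Composing `π` on the right with the transposition `(x y)`, for
`x, y ∈ A ∪ B`, leaves `π(A ∪ B)` unchanged and moves this arg-min from `x` to `y`; hence the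
collision event is the union of `|A ∩ B|` of the `|A ∪ B|` equally large fibres of the arg-min.
-/

open Finset

namespace Equiv.Perm

variable {α : Type*} [LinearOrder α]

noncomputable def argminOn (π : Perm α) (s : Finset α) (hs : s.Nonempty) : α :=
  π.symm ((s.image π).min' (hs.image π))

variable {s t : Finset α} (hs : s.Nonempty) (π : Perm α)

lemma argminOn_mem : π.argminOn s hs ∈ s := by
  obtain ⟨a, ha, hπa⟩ := mem_image.mp ((s.image π).min'_mem (hs.image π))
  rwa [argminOn, ← hπa, symm_apply_apply]

lemma coe_apply_argminOn : (π (π.argminOn s hs) : WithTop α) = (s.image π).min := by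
  rw [argminOn, apply_symm_apply, coe_min']

lemma min_image_eq_iff_argminOn_mem (hts : t ⊆ s) :
    (t.image π).min = (s.image π).min ↔ π.argminOn s hs ∈ t := by
  rw [← coe_apply_argminOn hs π]
  constructor
  · intro hmin
    simpa using mem_of_min hmin
  · intro hmem
    exact le_antisymm (min_le (mem_image_of_mem π hmem))
      (coe_apply_argminOn hs π ▸ min_mono (image_subset_image hts))

lemma min_image_eq_min_image_iff {A B : Finset α} (h : (A ∪ B).Nonempty) :
    (A.image π).min = (B.image π).min ↔ π.argminOn (A ∪ B) h ∈ A ∩ B := by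
  rw [mem_inter, ← min_image_eq_iff_argminOn_mem h π subset_union_left,
    ← min_image_eq_iff_argminOn_mem h π subset_union_right, image_union, min_union]
  constructor
  · intro hAB
    simp [hAB]
  · rintro ⟨hA, hB⟩
    exact hA.trans hB.symm

lemma argminOn_mul_swap {x y : α} (hx : x ∈ s) (hy : y ∈ s) :
    (π * swap x y).argminOn s hs = swap x y (π.argminOn s hs) := by
  have hswap : s.image (swap x y) = s := by
    simpa [map_eq_image] using map_perm (σ := swap x y) fun a ha => by
      rcases (swap_apply_ne_self_iff.mp ha).2 with rfl | rfl <;> assumption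
  have himage : s.image (π * swap x y) = s.image π := by
    rw [coe_mul, ← image_image, hswap]
  simp only [argminOn, himage]
  simp only [mul_def, symm_trans_apply, symm_swap]

variable [Fintype α]

lemma card_argminOn_eq_eq {x y : α} (hx : x ∈ s) (hy : y ∈ s) :
    #{π : Perm α | π.argminOn s hs = x} = #{π : Perm α | π.argminOn s hs = y} := by
  refine card_nbij' (· * swap x y) (· * swap x y) ?_ ?_ ?_ ?_ <;> intro π hπ
  · simp_all [argminOn_mul_swap hs π hx hy]
  · simp_all [argminOn_mul_swap hs π hx hy]
  · simp [mul_assoc]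
  · simp [mul_assoc]

lemma card_argminOn_mem {x : α} (hts : t ⊆ s) (hx : x ∈ s) :
    #{π : Perm α | π.argminOn s hs ∈ t} = #t * #{π : Perm α | π.argminOn s hs = x} := by
  rw [← sum_card_fiberwise_eq_card_filter]
  exact sum_const_nat fun y hy => card_argminOn_eq_eq hs (hts hy) hx

lemma card_argminOn_mem_div_card (hts : t ⊆ s) :
    (#{π : Perm α | π.argminOn s hs ∈ t} : ℝ) / Fintype.card (Perm α) = #t / #s := by
  obtain ⟨x, hx⟩ := hs
  have htotal : Fintype.card (Perm α) = #s * #{π : Perm α | π.argminOn s ⟨x, hx⟩ = x} := by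
    rw [← card_argminOn_mem ⟨x, hx⟩ subset_rfl hx, filter_true_of_mem fun π _ =>
      argminOn_mem ⟨x, hx⟩ π, card_univ]
  have hfiber : (#{π : Perm α | π.argminOn s ⟨x, hx⟩ = x} : ℝ) ≠ 0 := by
    have := (Fintype.card_pos (α := Perm α)).ne'
    rw [htotal] at this
    exact_mod_cast right_ne_zero_of_mul this
  rw [card_argminOn_mem ⟨x, hx⟩ hts hx, htotal]
  push_cast
  exact mul_div_mul_right _ _ hfiber

end Equiv.Perm

open Equiv.Perm in
/-- MinHash collision probability: for finite sets `A, B ⊆ Fin n` with `A ∪ B` nonempty,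
the probability over a uniformly random permutation `π` of `Fin n` that
`min π(A) = min π(B)` equals the Jaccard similarity `|A ∩ B| / |A ∪ B|`. -/
theorem minhash_collision_probability
    (n : ℕ) (A B : Finset (Fin n)) (h : (A ∪ B).Nonempty) :
    ((Finset.univ.filter
        (fun π : Equiv.Perm (Fin n) => (A.image π).min = (B.image π).min)).card : ℝ)
        / (Fintype.card (Equiv.Perm (Fin n)))
      = ((A ∩ B).card : ℝ) / ((A ∪ B).card : ℝ) := by
  simp_rw [min_image_eq_min_image_iff _ h]
  exact card_argminOn_mem_div_card h inter_subset_union
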